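/- Let C be a category that admits an initial object, let 𝕀 = {0 < 1} be the poset with two elements viewed as a category, and let D = Fun(𝕀, C) be the morphism category of C. Then there is a canonical equivalence of categories (Ĉ)^𝕀 ≃ D̂ between the morphism category of the sequential completion of C and the sequential completion of the morphism category of C. -/

import Mathlib

/-!
STATEMENT 8: If `C` admits an initial object and `𝕀 = {0 < 1}` (here `Fin 2`) is the
two-element poset, then there is an equivalence `(Ĉ)^𝕀 ≌ D̂` between the morphism
category of the sequential completion of `C` and the sequential completion of the
morphism category `D = Fun(𝕀, C)`.
-/

open CategoryTheory CategoryTheory.Limits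

universe v u

namespace SeqCompletion

def IsCauchy {C : Type u} [Category.{v} C] (X : ℕ ⥤ C) : Prop :=
  ∀ C' : C, ∃ n : ℕ, ∀ (i j : ℕ), n ≤ i → ∀ (hij : i ≤ j),
    Function.Bijective (fun g : C' ⟶ X.obj i => g ≫ X.map (homOfLE hij))

variable (C : Type u) [Category.{v} C]

abbrev CauchCat := ObjectProperty.FullSubcategory (fun X : ℕ ⥤ C => IsCauchy X)

def evtInv : MorphismProperty (CauchCat C) := fun X _Y φ =>
  ∀ C' : C, ∃ n : ℕ, ∀ i : ℕ, n ≤ i →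
    Function.Bijective (fun g : C' ⟶ X.obj.obj i =>
      g ≫ ((ObjectProperty.ι _).map φ).app i)

/-- The sequential completion `Ĉ = Cauch(ℕ, C)[S⁻¹]`. -/
abbrev Shat := (evtInv C).Localization

/-! ### Part A : calculus of left fractions for `evtInv` -/

section PartA

variable {E : Type u} [Category.{v} E]

lemma map_map (F : ℕ ⥤ E) {i j k : ℕ} (h1 : i ≤ j) (h2 : j ≤ k) :
    F.map (homOfLE h1) ≫ F.map (homOfLE h2) = F.map (homOfLE (h1.trans h2)) := by
  rw [← F.map_comp]; rfl

lemma evtInv_app {X Y : CauchCat E} (s : X ⟶ Y) (hs : evtInv E s) (C' : E) :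
    ∃ n : ℕ, ∀ i : ℕ, n ≤ i →
      Function.Bijective (fun g : C' ⟶ X.obj.obj i => g ≫ s.hom.app i) := hs C'

/-- Reindexing a Cauchy sequence along a monotone map `φ` with `id ≤ φ`. -/
def reindex (X : CauchCat E) (φ : ℕ →o ℕ) (hφ : ∀ i, i ≤ φ i) : CauchCat E :=
  ⟨φ.monotone.functor ⋙ X.obj, fun C' => by
    obtain ⟨n, hn⟩ := X.property C'
    exact ⟨n, fun i j hi hij => hn (φ i) (φ j) (hi.trans (hφ i)) (φ.monotone hij)⟩⟩

/-- The canonical transition morphism `X ⟶ reindex X φ hφ`. -/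
def toReindex (X : CauchCat E) (φ : ℕ →o ℕ) (hφ : ∀ i, i ≤ φ i) :
    X ⟶ reindex X φ hφ := ObjectProperty.homMk
  { app i := X.obj.map (homOfLE (hφ i))
    naturality i j f := by
      dsimp [reindex]
      erw [← X.obj.map_comp, ← X.obj.map_comp]
      rfl }

lemma toReindex_mem (X : CauchCat E) (φ : ℕ →o ℕ) (hφ : ∀ i, i ≤ φ i) :
    evtInv E (toReindex X φ hφ) := fun C' => by
  obtain ⟨n, hn⟩ := X.property C'
  exact ⟨n, fun i hi => hn i (φ i) hi (hφ i)⟩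

/-- Reindexing of a morphism of sequences. -/
def reindexMap {X Y : CauchCat E} (f : X ⟶ Y) (φ : ℕ →o ℕ) (hφ : ∀ i, i ≤ φ i) :
    reindex X φ hφ ⟶ reindex Y φ hφ :=
  ObjectProperty.homMk (Functor.whiskerLeft φ.monotone.functor f.hom)

lemma evtInv_id (X : CauchCat E) : evtInv E (𝟙 X) := fun C' => by
  refine ⟨0, fun i _ => ?_⟩
  have : (fun g : C' ⟶ X.obj.obj i =>
      g ≫ ((ObjectProperty.ι _).map (𝟙 X)).app i) = id := by
    funext g
    exact Category.comp_id g
  rw [this]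
  exact Function.bijective_id

lemma evtInv_comp {X Y Z : CauchCat E} (f : X ⟶ Y) (g : Y ⟶ Z)
    (hf : evtInv E f) (hg : evtInv E g) : evtInv E (f ≫ g) := fun C' => by
  obtain ⟨n₁, h₁⟩ := hf C'
  obtain ⟨n₂, h₂⟩ := hg C'
  refine ⟨max n₁ n₂, fun i hi => ?_⟩
  have : (fun u : C' ⟶ X.obj.obj i =>
      u ≫ ((ObjectProperty.ι _).map (f ≫ g)).app i) =
      (fun v : C' ⟶ Y.obj.obj i => v ≫ g.hom.app i) ∘ (fun u : C' ⟶ X.obj.obj i => u ≫ f.hom.app i) := by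
    funext u
    exact (Category.assoc u (f.hom.app i) (g.hom.app i)).symm
  rw [this]
  exact (h₂ i (le_of_max_le_right hi)).comp (h₁ i (le_of_max_le_left hi))

instance : (evtInv E).IsMultiplicative where
  id_mem X := evtInv_id X
  comp_mem f g hf hg := evtInv_comp f g hf hg

/-- The splitting lemma : an eventually invertible morphism admits an
"inverse up to reindexing". -/
lemma splitting {X Y : CauchCat E} (s : X ⟶ Y) (hs : evtInv E s) :
    ∃ (φ : ℕ →o ℕ) (hφ : ∀ i, i ≤ φ i) (g : Y ⟶ reindex X φ hφ),
      (∀ i, g.hom.app i ≫ s.hom.app (φ i) = Y.obj.map (homOfLE (hφ i))) ∧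
      (∀ i, s.hom.app i ≫ g.hom.app i = X.obj.map (homOfLE (hφ i))) := by
  -- the index from which `s` is invertible against `C'`
  let N : E → ℕ := fun C' => (hs C').choose
  have hN : ∀ (C' : E) (i : ℕ), N C' ≤ i →
      Function.Bijective (fun g : C' ⟶ X.obj.obj i => g ≫ s.hom.app i) :=
    fun C' => (hs C').choose_spec
  -- construction of the reindexing function
  let φ' : ℕ → ℕ := fun i => Nat.rec
    (max (N (X.obj.obj 0)) (N (Y.obj.obj 0)))
    (fun i ih => max (ih + 1) (max (i + 1) (max (N (X.obj.obj (i + 1))) (N (Y.obj.obj (i + 1))))))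
    i
  have hmono : StrictMono φ' := strictMono_nat_of_lt_succ (fun i => by
    have : φ' i + 1 ≤ φ' (i + 1) := le_max_left _ _
    omega)
  have hφ : ∀ i, i ≤ φ' i := by
    intro i
    induction i with
    | zero => exact Nat.zero_le _
    | succ i ih =>
        have h1 : i + 1 ≤ max (φ' i + 1) (max (i + 1) (max (N (X.obj.obj (i + 1)))
          (N (Y.obj.obj (i + 1))))) := le_trans (le_max_left _ _) (le_max_right _ _)
        exact h1
  have hφX : ∀ i, N (X.obj.obj i) ≤ φ' i := by
    intro i
    cases i with
    | zero => exact le_max_left _ _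
    | succ i => exact le_trans (le_trans (le_max_left _ _) (le_max_right _ _)) (le_max_right _ _)
  have hφY : ∀ i, N (Y.obj.obj i) ≤ φ' i := by
    intro i
    cases i with
    | zero => exact le_max_right _ _
    | succ i => exact le_trans (le_trans (le_max_right _ _) (le_max_right _ _)) (le_max_right _ _)
  set φ : ℕ →o ℕ := ⟨φ', hmono.monotone⟩ with hφdef
  -- the bijections used to define `g`
  have bij : ∀ i, Function.Bijective
      (fun g : Y.obj.obj i ⟶ X.obj.obj (φ i) => g ≫ s.hom.app (φ i)) :=
    fun i => hN (Y.obj.obj i) (φ i) (hφY i)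
  let gapp : ∀ i, Y.obj.obj i ⟶ X.obj.obj (φ i) :=
    fun i => (Equiv.ofBijective _ (bij i)).symm (Y.obj.map (homOfLE (hφ i)))
  have fact1 : ∀ i, gapp i ≫ s.hom.app (φ i) = Y.obj.map (homOfLE (hφ i)) := by
    intro i
    exact (Equiv.ofBijective _ (bij i)).apply_symm_apply (Y.obj.map (homOfLE (hφ i)))
  have fact2 : ∀ i, s.hom.app i ≫ gapp i = X.obj.map (homOfLE (hφ i)) := by
    intro i
    apply (hN (X.obj.obj i) (φ i) (hφX i)).injective
    dsimp only
    rw [Category.assoc, fact1 i, ← s.hom.naturality]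
    rfl
  have gnat : ∀ (i j : ℕ) (hij : i ≤ j),
      gapp i ≫ X.obj.map (homOfLE (φ.monotone hij)) = Y.obj.map (homOfLE hij) ≫ gapp j := by
    intro i j hij
    apply (hN (Y.obj.obj i) (φ j) (le_trans (hφY i) (φ.monotone hij))).injective
    dsimp only
    rw [Category.assoc, Category.assoc, fact1 j, s.hom.naturality, ← Category.assoc, fact1 i,
      map_map, map_map]
  refine ⟨φ, hφ, ObjectProperty.homMk ⟨gapp, ?_⟩, fact1, fact2⟩
  intro i j hij
  exact (gnat i j (leOfHom hij)).symm

instance : (evtInv E).HasLeftCalculusOfFractions where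
  exists_leftFraction X Y ρ := by
    obtain ⟨φ, hφ, g, h1, h2⟩ := splitting ρ.s ρ.hs
    refine ⟨MorphismProperty.LeftFraction.mk (g ≫ reindexMap ρ.f φ hφ)
      (toReindex Y φ hφ) (toReindex_mem Y φ hφ), ?_⟩
    apply InducedCategory.hom_ext
    apply NatTrans.ext
    funext i
    show ρ.f.hom.app i ≫ Y.obj.map (homOfLE (hφ i)) = ρ.s.hom.app i ≫ g.hom.app i ≫ ρ.f.hom.app (φ i)
    erw [← Category.assoc, h2 i, ρ.f.hom.naturality]
  ext X' X Y f₁ f₂ s hs h := by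
    obtain ⟨φ, hφ, g, h1, h2⟩ := splitting s hs
    refine ⟨reindex Y φ hφ, toReindex Y φ hφ, toReindex_mem Y φ hφ, ?_⟩
    apply InducedCategory.hom_ext
    apply NatTrans.ext
    funext i
    show f₁.hom.app i ≫ Y.obj.map (homOfLE (hφ i)) = f₂.hom.app i ≫ Y.obj.map (homOfLE (hφ i))
    erw [← f₁.hom.naturality, ← f₂.hom.naturality, ← h1 i, Category.assoc, Category.assoc]
    congr 1
    exact congrArg (fun (q : X' ⟶ Y) => q.hom.app (φ i)) h

end PartA


/-! ### Part B : components of Cauchy sequences in the morphism category -/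

section PartB

variable {C : Type u} [Category.{v} C]

open ComposableArrows

def fzero : Fin 2 := ⟨0, by omega⟩
def fone : Fin 2 := ⟨1, by omega⟩
def f01 : fzero ⟶ fone := homOfLE (Fin.mk_le_mk.mpr (by omega))

/-- Transfer of bijectivity along compatible equivalences. -/
lemma bij_transfer {α β α' β' : Sort*} (e₁ : α ≃ α') (e₂ : β ≃ β') (f : α → β) (f' : α' → β')
    (h : ∀ a, e₂ (f a) = f' (e₁ a)) (hf : Function.Bijective f) : Function.Bijective f' := by
  have : f' = e₂ ∘ f ∘ e₁.symm := by
    funext a'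
    have := h (e₁.symm a')
    simp only [Equiv.apply_symm_apply] at this
    exact this.symm
  rw [this]
  exact e₂.bijective.comp (hf.comp e₁.symm.bijective)

/-- Morphisms from `mk₁ (𝟙 A)` to `F` are the same as morphisms `A ⟶ obj' F 0`. -/
def equivId (A : C) (F : Fin 2 ⥤ C) : (mk₁ (𝟙 A) ⟶ F) ≃ (A ⟶ obj' F 0) where
  toFun η := app' η 0
  invFun g := homMk₁ g (g ≫ map' F 0 1) (by exact Category.id_comp _)
  left_inv η := by
    apply hom_ext₁
    · rfl
    · have := naturality' η 0 1
      dsimp at this ⊢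
      exact this.symm.trans (Category.id_comp _)
  right_inv g := rfl

/-- Morphisms from `mk₁ (⊥ ⟶ A)` to `F` are the same as morphisms `A ⟶ obj' F 1`. -/
noncomputable def equivInit [HasInitial C] (A : C) (F : Fin 2 ⥤ C) :
    (mk₁ (initial.to A) ⟶ F) ≃ (A ⟶ obj' F 1) where
  toFun η := app' η 1
  invFun g := homMk₁ (initial.to _) g (by apply Limits.initial.hom_ext)
  left_inv η := by
    apply hom_ext₁
    · apply Limits.initial.hom_ext
    · rfl
  right_inv g := rfl

lemma bij0_of (A : C) {F G : Fin 2 ⥤ C} (ψ : F ⟶ G)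
    (h : Function.Bijective (fun η : mk₁ (𝟙 A) ⟶ F => η ≫ ψ)) :
    Function.Bijective (fun g : A ⟶ obj' F 0 => g ≫ app' ψ 0) :=
  bij_transfer (equivId A F) (equivId A G) _ _ (fun _ => rfl) h

lemma bij1_of [HasInitial C] (A : C) {F G : Fin 2 ⥤ C} (ψ : F ⟶ G)
    (h : Function.Bijective (fun η : mk₁ (initial.to A) ⟶ F => η ≫ ψ)) :
    Function.Bijective (fun g : A ⟶ obj' F 1 => g ≫ app' ψ 1) :=
  bij_transfer (equivInit A F) (equivInit A G) _ _ (fun _ => rfl) h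

lemma bij_full (A : Fin 2 ⥤ C) {F G : Fin 2 ⥤ C} (ψ : F ⟶ G)
    (h0 : Function.Bijective (fun g : obj' A 0 ⟶ obj' F 0 => g ≫ app' ψ 0))
    (h1 : Function.Bijective (fun g : obj' A 1 ⟶ obj' F 1 => g ≫ app' ψ 1))
    (h01 : Function.Bijective (fun g : obj' A 0 ⟶ obj' F 1 => g ≫ app' ψ 1)) :
    Function.Bijective (fun η : A ⟶ F => η ≫ ψ) := by
  constructor
  · intro η η' hee
    apply hom_ext₁
    · exact h0.injective (congrArg (fun q => app' q 0) hee)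
    · exact h1.injective (congrArg (fun q => app' q 1) hee)
  · intro ξ
    obtain ⟨u₀, hu₀⟩ := h0.surjective (ξ.app fzero)
    obtain ⟨u₁, hu₁⟩ := h1.surjective (ξ.app fone)
    have hu₀' : u₀ ≫ ψ.app fzero = ξ.app fzero := hu₀
    have hu₁' : u₁ ≫ ψ.app fone = ξ.app fone := hu₁
    have sq : A.map f01 ≫ u₁ = u₀ ≫ F.map f01 := by
      apply h01.injective
      show (A.map f01 ≫ u₁) ≫ ψ.app fone = (u₀ ≫ F.map f01) ≫ ψ.app fone
      have e1 := ξ.naturality f01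
      have e2 := ψ.naturality f01
      erw [Category.assoc, hu₁', Category.assoc, e2, ← Category.assoc, hu₀']
      exact e1
    refine ⟨homMk₁ u₀ u₁ sq, ?_⟩
    apply hom_ext₁
    · exact hu₀'
    · exact hu₁'

/-- The evaluation-at-0 functor on Cauchy sequences in the morphism category. -/
def Cmp0 [HasInitial C] : CauchCat (Fin 2 ⥤ C) ⥤ CauchCat C :=
  ObjectProperty.lift _
    (ObjectProperty.ι _ ⋙
      (Functor.whiskeringRight ℕ (Fin 2 ⥤ C) C).obj ((evaluation (Fin 2) C).obj ⟨0, by omega⟩))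
    (fun Z C' => by
      obtain ⟨n, hn⟩ := Z.property (mk₁ (𝟙 C'))
      exact ⟨n, fun i j hi hij => bij0_of C' (Z.obj.map (homOfLE hij)) (hn i j hi hij)⟩)

/-- The evaluation-at-1 functor on Cauchy sequences in the morphism category. -/
def Cmp1 [HasInitial C] : CauchCat (Fin 2 ⥤ C) ⥤ CauchCat C :=
  ObjectProperty.lift _
    (ObjectProperty.ι _ ⋙
      (Functor.whiskeringRight ℕ (Fin 2 ⥤ C) C).obj ((evaluation (Fin 2) C).obj ⟨1, by omega⟩))
    (fun Z C' => by
      obtain ⟨n, hn⟩ := Z.property (mk₁ (initial.to C'))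
      exact ⟨n, fun i j hi hij => bij1_of C' (Z.obj.map (homOfLE hij)) (hn i j hi hij)⟩)

variable [HasInitial C]

/-- The canonical morphism `Cmp0 Z ⟶ Cmp1 Z`. -/
def cmpHom (Z : CauchCat (Fin 2 ⥤ C)) : Cmp0.obj Z ⟶ Cmp1.obj Z :=
  ObjectProperty.homMk (Functor.whiskerLeft Z.obj ((evaluation (Fin 2) C).map f01))

lemma cmpHom_natural {Z Z' : CauchCat (Fin 2 ⥤ C)} (ψ : Z ⟶ Z') :
    Cmp0.map ψ ≫ cmpHom Z' = cmpHom Z ≫ Cmp1.map ψ := by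
  apply InducedCategory.hom_ext
  apply NatTrans.ext
  funext i
  show (Cmp0.map ψ).hom.app i ≫ (cmpHom Z').hom.app i = (cmpHom Z).hom.app i ≫ (Cmp1.map ψ).hom.app i
  exact ((ψ.hom.app i).naturality _).symm

lemma evtInv_cmp0 {Z Z' : CauchCat (Fin 2 ⥤ C)} (ψ : Z ⟶ Z')
    (hψ : evtInv (Fin 2 ⥤ C) ψ) : evtInv C (Cmp0.map ψ) := fun C' => by
  obtain ⟨n, hn⟩ := hψ (mk₁ (𝟙 C'))
  exact ⟨n, fun i hi => bij0_of C' (ψ.hom.app i) (hn i hi)⟩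

lemma evtInv_cmp1 {Z Z' : CauchCat (Fin 2 ⥤ C)} (ψ : Z ⟶ Z')
    (hψ : evtInv (Fin 2 ⥤ C) ψ) : evtInv C (Cmp1.map ψ) := fun C' => by
  obtain ⟨n, hn⟩ := hψ (mk₁ (initial.to C'))
  exact ⟨n, fun i hi => bij1_of C' (ψ.hom.app i) (hn i hi)⟩

lemma evtInv_of_cmp {Z Z' : CauchCat (Fin 2 ⥤ C)} (ψ : Z ⟶ Z')
    (h0 : evtInv C (Cmp0.map ψ)) (h1 : evtInv C (Cmp1.map ψ)) :
    evtInv (Fin 2 ⥤ C) ψ := fun A => by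
  obtain ⟨n0, h0'⟩ := h0 (obj' A 0)
  obtain ⟨n1, h1'⟩ := h1 (obj' A 1)
  obtain ⟨n01, h01'⟩ := h1 (obj' A 0)
  refine ⟨max n0 (max n1 n01), fun i hi => ?_⟩
  exact bij_full A (ψ.hom.app i) (h0' i (by omega)) (h1' i (by omega)) (h01' i (by omega))

/-- Gluing a morphism of Cauchy sequences into a Cauchy sequence of morphisms. -/
def glueFun {F G : ℕ ⥤ C} (w : F ⟶ G) : ℕ ⥤ (Fin 2 ⥤ C) where
  obj i := mk₁ (w.app i)
  map {i j} h := homMk₁ (F.map h) (G.map h) (by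
    dsimp
    exact (w.naturality h).symm)
  map_id i := by
    apply hom_ext₁ <;> dsimp <;> simp <;> rfl
  map_comp h h' := by
    apply hom_ext₁ <;> dsimp <;> simp <;> rfl

def glue {X₀ X₁ : CauchCat C} (w : X₀ ⟶ X₁) : CauchCat (Fin 2 ⥤ C) :=
  ⟨glueFun w.hom, fun A => by
    obtain ⟨n0, h0⟩ := X₀.property (obj' A 0)
    obtain ⟨n1, h1⟩ := X₁.property (obj' A 1)
    obtain ⟨n01, h01⟩ := X₁.property (obj' A 0)
    refine ⟨max n0 (max n1 n01), fun i j hi hij => ?_⟩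
    exact bij_full A ((glueFun w.hom).map (homOfLE hij))
      (h0 i j (by omega) hij) (h1 i j (by omega) hij) (h01 i j (by omega) hij)⟩

/-- Constructing a morphism into a glued object. -/
def intoGlue {Z : CauchCat (Fin 2 ⥤ C)} {X₀ X₁ : CauchCat C} {w : X₀ ⟶ X₁}
    (a₀ : Cmp0.obj Z ⟶ X₀) (a₁ : Cmp1.obj Z ⟶ X₁) (sq : cmpHom Z ≫ a₁ = a₀ ≫ w) :
    Z ⟶ glue w := ObjectProperty.homMk
  { app i := homMk₁ (a₀.hom.app i) (a₁.hom.app i) (by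
      have h2 : (cmpHom Z).hom.app i ≫ a₁.hom.app i = a₀.hom.app i ≫ w.hom.app i :=
        congrArg (fun (q : Cmp0.obj Z ⟶ X₁) => q.hom.app i) sq
      exact h2)
    naturality i j h := by
      apply hom_ext₁
      · exact a₀.hom.naturality h
      · exact a₁.hom.naturality h }

lemma cmp0_intoGlue {Z : CauchCat (Fin 2 ⥤ C)} {X₀ X₁ : CauchCat C} {w : X₀ ⟶ X₁}
    (a₀ : Cmp0.obj Z ⟶ X₀) (a₁ : Cmp1.obj Z ⟶ X₁) (sq : cmpHom Z ≫ a₁ = a₀ ≫ w) :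
    Cmp0.map (intoGlue a₀ a₁ sq) = a₀ := by
  apply InducedCategory.hom_ext
  apply NatTrans.ext
  funext i
  rfl

lemma cmp1_intoGlue {Z : CauchCat (Fin 2 ⥤ C)} {X₀ X₁ : CauchCat C} {w : X₀ ⟶ X₁}
    (a₀ : Cmp0.obj Z ⟶ X₀) (a₁ : Cmp1.obj Z ⟶ X₁) (sq : cmpHom Z ≫ a₁ = a₀ ≫ w) :
    Cmp1.map (intoGlue a₀ a₁ sq) = a₁ := by
  apply InducedCategory.hom_ext
  apply NatTrans.ext
  funext i
  rfl

lemma cmp_ext {Z Z' : CauchCat (Fin 2 ⥤ C)} (p q : Z ⟶ Z')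
    (e0 : Cmp0.map p = Cmp0.map q) (e1 : Cmp1.map p = Cmp1.map q) : p = q := by
  apply InducedCategory.hom_ext
  apply NatTrans.ext
  funext i
  apply hom_ext₁
  · exact congrArg (fun (r : Cmp0.obj Z ⟶ Cmp0.obj Z') => r.hom.app i) e0
  · exact congrArg (fun (r : Cmp1.obj Z ⟶ Cmp1.obj Z') => r.hom.app i) e1

/-- Identification of the 0-component of a glued object. -/
def glueIso0 {X₀ X₁ : CauchCat C} (w : X₀ ⟶ X₁) : Cmp0.obj (glue w) ≅ X₀ where
  hom := ObjectProperty.homMk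
    { app := fun i => 𝟙 _
      naturality := fun i j h => by
        show (Cmp0.obj (glue w)).obj.map h ≫ 𝟙 _ = 𝟙 _ ≫ X₀.obj.map h
        rw [Category.comp_id, Category.id_comp]
        rfl }
  inv := ObjectProperty.homMk
    { app := fun i => 𝟙 _
      naturality := fun i j h => by
        show X₀.obj.map h ≫ 𝟙 _ = 𝟙 _ ≫ (Cmp0.obj (glue w)).obj.map h
        rw [Category.comp_id, Category.id_comp]
        rfl }
  hom_inv_id := by apply InducedCategory.hom_ext; apply NatTrans.ext; funext i; exact Category.comp_id _
  inv_hom_id := by apply InducedCategory.hom_ext; apply NatTrans.ext; funext i; exact Category.comp_id _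

def glueIso1 {X₀ X₁ : CauchCat C} (w : X₀ ⟶ X₁) : Cmp1.obj (glue w) ≅ X₁ where
  hom := ObjectProperty.homMk
    { app := fun i => 𝟙 _
      naturality := fun i j h => by
        show (Cmp1.obj (glue w)).obj.map h ≫ 𝟙 _ = 𝟙 _ ≫ X₁.obj.map h
        rw [Category.comp_id, Category.id_comp]
        rfl }
  inv := ObjectProperty.homMk
    { app := fun i => 𝟙 _
      naturality := fun i j h => by
        show X₁.obj.map h ≫ 𝟙 _ = 𝟙 _ ≫ (Cmp1.obj (glue w)).obj.map h
        rw [Category.comp_id, Category.id_comp]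
        rfl }
  hom_inv_id := by apply InducedCategory.hom_ext; apply NatTrans.ext; funext i; exact Category.comp_id _
  inv_hom_id := by apply InducedCategory.hom_ext; apply NatTrans.ext; funext i; exact Category.comp_id _

lemma cmpHom_glue {X₀ X₁ : CauchCat C} (w : X₀ ⟶ X₁) :
    cmpHom (glue w) = (glueIso0 w).hom ≫ w ≫ (glueIso1 w).inv := by
  apply InducedCategory.hom_ext
  apply NatTrans.ext
  funext i
  have h2 : ((glueIso0 w).hom ≫ w ≫ (glueIso1 w).inv).hom.app i = w.hom.app i := by
    show 𝟙 _ ≫ w.hom.app i ≫ 𝟙 _ = w.hom.app i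
    simp
  rw [h2]
  rfl

end PartB


/-! ### Part C : the comparison functor -/

section PartC

variable {C : Type u} [Category.{v} C] [HasInitial C]

open ComposableArrows

lemma map'_mk₁ {E : Type*} [Category E] {a b : E} (f : a ⟶ b) :
    ComposableArrows.map' (ComposableArrows.mk₁ f) 0 1 = f := rfl

/-- The comparison functor from Cauchy sequences in the morphism category to
the morphism category of the completion. -/
noncomputable def Pfun : CauchCat (Fin 2 ⥤ C) ⥤ (Fin 2 ⥤ Shat C) where
  obj Z := mk₁ ((evtInv C).Q.map (cmpHom Z))
  map {Z Z'} ψ := homMk₁ ((evtInv C).Q.map (Cmp0.map ψ)) ((evtInv C).Q.map (Cmp1.map ψ)) (by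
    show (evtInv C).Q.map (cmpHom Z) ≫ (evtInv C).Q.map (Cmp1.map ψ) =
      (evtInv C).Q.map (Cmp0.map ψ) ≫ (evtInv C).Q.map (cmpHom Z')
    rw [← CategoryTheory.Functor.map_comp, ← CategoryTheory.Functor.map_comp, cmpHom_natural])
  map_id Z := by
    apply hom_ext₁
    · show (evtInv C).Q.map (Cmp0.map (𝟙 Z)) = 𝟙 ((evtInv C).Q.obj (Cmp0.obj Z))
      rw [CategoryTheory.Functor.map_id, CategoryTheory.Functor.map_id]
    · show (evtInv C).Q.map (Cmp1.map (𝟙 Z)) = 𝟙 ((evtInv C).Q.obj (Cmp1.obj Z))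
      rw [CategoryTheory.Functor.map_id, CategoryTheory.Functor.map_id]
  map_comp {Z Z' Z''} f g := by
    apply hom_ext₁
    · show (evtInv C).Q.map (Cmp0.map (f ≫ g)) =
        (evtInv C).Q.map (Cmp0.map f) ≫ (evtInv C).Q.map (Cmp0.map g)
      rw [CategoryTheory.Functor.map_comp, CategoryTheory.Functor.map_comp]
    · show (evtInv C).Q.map (Cmp1.map (f ≫ g)) =
        (evtInv C).Q.map (Cmp1.map f) ≫ (evtInv C).Q.map (Cmp1.map g)
      rw [CategoryTheory.Functor.map_comp, CategoryTheory.Functor.map_comp]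

lemma Pfun_inverts : (evtInv (Fin 2 ⥤ C)).IsInvertedBy (Pfun (C := C)) := by
  intro Z Z' ψ hψ
  have h0 : IsIso ((evtInv C).Q.map (Cmp0.map ψ)) :=
    Localization.inverts (evtInv C).Q (evtInv C) _ (evtInv_cmp0 ψ hψ)
  have h1 : IsIso ((evtInv C).Q.map (Cmp1.map ψ)) :=
    Localization.inverts (evtInv C).Q (evtInv C) _ (evtInv_cmp1 ψ hψ)
  have : ∀ (i : Fin 2), IsIso ((Pfun.map ψ).app i) := by
    intro i
    match i with
    | ⟨0, _⟩ => exact h0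
    | ⟨1, _⟩ => exact h1
  exact NatIso.isIso_of_isIso_app _

/-- The induced functor on the completion of the morphism category. -/
noncomputable def Pbar : Shat (Fin 2 ⥤ C) ⥤ (Fin 2 ⥤ Shat C) :=
  Localization.Construction.lift Pfun Pfun_inverts

lemma Pbar_obj (Z : CauchCat (Fin 2 ⥤ C)) :
    (Pbar (C := C)).obj ((evtInv (Fin 2 ⥤ C)).Q.obj Z) = Pfun.obj Z := rfl

lemma Pbar_map {Z Z' : CauchCat (Fin 2 ⥤ C)} (ψ : Z ⟶ Z') :
    (Pbar (C := C)).map ((evtInv (Fin 2 ⥤ C)).Q.map ψ) = Pfun.map ψ := by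
  have h := Functor.congr_hom (Localization.Construction.fac Pfun (Pfun_inverts (C := C))) ψ
  exact Category.id_comp _

end PartC

/-! ### Part D : the comparison functor is an equivalence -/

section PartD

variable {C : Type u} [Category.{v} C] [HasInitial C]

open ComposableArrows MorphismProperty

lemma obj_eq_Q_obj (M : Shat (Fin 2 ⥤ C)) :
    ∃ Z : CauchCat (Fin 2 ⥤ C), M = (evtInv (Fin 2 ⥤ C)).Q.obj Z :=
  ⟨((Localization.Construction.objEquiv (evtInv (Fin 2 ⥤ C))).symm M), rfl⟩

lemma Qmap_cmpHom_glue {X₀ X₁ : CauchCat C} (w : X₀ ⟶ X₁) :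
    (evtInv C).Q.map (cmpHom (glue w)) ≫ (evtInv C).Q.map (glueIso1 w).hom =
      (evtInv C).Q.map (glueIso0 w).hom ≫ (evtInv C).Q.map w := by
  rw [cmpHom_glue, CategoryTheory.Functor.map_comp, CategoryTheory.Functor.map_comp,
    Category.assoc, Category.assoc,
    ← (evtInv C).Q.map_comp (glueIso1 w).inv (glueIso1 w).hom, Iso.inv_hom_id,
    CategoryTheory.Functor.map_id, Category.comp_id]

lemma Pbar_essSurj : (Pbar (C := C)).EssSurj := by
  haveI := Localization.essSurj (evtInv C).Q (evtInv C)
  constructor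
  intro A
  obtain ⟨Z₀, ⟨e₀⟩⟩ : ∃ Z₀, Nonempty ((evtInv C).Q.obj Z₀ ≅ obj' A 0) :=
    ⟨_, ⟨(evtInv C).Q.objObjPreimageIso (obj' A 0)⟩⟩
  obtain ⟨Z₁, ⟨e₁⟩⟩ : ∃ Z₁, Nonempty ((evtInv C).Q.obj Z₁ ≅ obj' A 1) :=
    ⟨_, ⟨(evtInv C).Q.objObjPreimageIso (obj' A 1)⟩⟩
  obtain ⟨fr, hfr⟩ := Localization.exists_leftFraction (evtInv C).Q (evtInv C)
    (e₀.hom ≫ map' A 0 1 ≫ e₁.inv)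
  refine ⟨(evtInv (Fin 2 ⥤ C)).Q.obj (glue fr.f), ⟨?_⟩⟩
  refine (?_ : Pfun.obj (glue fr.f) ≅ A)
  refine isoMk₁ ((evtInv C).Q.mapIso (glueIso0 fr.f) ≪≫ e₀)
    ((evtInv C).Q.mapIso (glueIso1 fr.f) ≪≫
      (Localization.isoOfHom (evtInv C).Q (evtInv C) fr.s fr.hs).symm ≪≫ e₁) ?_
  have hmain : (evtInv C).Q.map fr.f ≫
      (Localization.isoOfHom (evtInv C).Q (evtInv C) fr.s fr.hs).inv =
      e₀.hom ≫ map' A 0 1 ≫ e₁.inv := by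
    rw [hfr]
    rw [← MorphismProperty.LeftFraction.map_comp_map_s fr (evtInv C).Q
      (Localization.inverts _ _), Category.assoc]
    have : (evtInv C).Q.map fr.s ≫
        (Localization.isoOfHom (evtInv C).Q (evtInv C) fr.s fr.hs).inv = 𝟙 _ :=
      Localization.isoOfHom_hom_inv_id (evtInv C).Q (evtInv C) fr.s fr.hs
    rw [this, Category.comp_id]
  show map' (mk₁ ((evtInv C).Q.map (cmpHom (glue fr.f)))) 0 1 ≫ _ = _
  rw [map'_mk₁]
  dsimp
  erw [← Category.assoc, Qmap_cmpHom_glue, Category.assoc,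
    ← Category.assoc ((evtInv C).Q.map fr.f), hmain]
  simp
  exact (Category.assoc _ _ _).symm

lemma Pbar_faithful : (Pbar (C := C)).Faithful := by
  constructor
  intro M M' f g hfg
  obtain ⟨Z, rfl⟩ := obj_eq_Q_obj M
  obtain ⟨Z', rfl⟩ := obj_eq_Q_obj M'
  obtain ⟨α, hα⟩ := Localization.exists_leftFraction (evtInv (Fin 2 ⥤ C)).Q
    (evtInv (Fin 2 ⥤ C)) f
  obtain ⟨β, hβ⟩ := Localization.exists_leftFraction (evtInv (Fin 2 ⥤ C)).Q
    (evtInv (Fin 2 ⥤ C)) g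
  obtain ⟨ψ, hψ⟩ := (MorphismProperty.RightFraction.mk α.s α.hs β.s).exists_leftFraction
  dsimp at hψ
  have hσ : evtInv (Fin 2 ⥤ C) (α.s ≫ ψ.f) := by
    rw [← hψ]
    exact evtInv_comp _ _ β.hs ψ.hs
  haveI hiso : IsIso ((evtInv (Fin 2 ⥤ C)).Q.map (α.s ≫ ψ.f)) :=
    Localization.inverts (evtInv (Fin 2 ⥤ C)).Q (evtInv (Fin 2 ⥤ C)) _ hσ
  have hf2 : f ≫ (evtInv (Fin 2 ⥤ C)).Q.map (α.s ≫ ψ.f) =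
      (evtInv (Fin 2 ⥤ C)).Q.map (α.f ≫ ψ.f) := by
    rw [CategoryTheory.Functor.map_comp, CategoryTheory.Functor.map_comp, ← Category.assoc, hα,
      MorphismProperty.LeftFraction.map_comp_map_s]
  have hg2 : g ≫ (evtInv (Fin 2 ⥤ C)).Q.map (α.s ≫ ψ.f) =
      (evtInv (Fin 2 ⥤ C)).Q.map (β.f ≫ ψ.s) := by
    rw [← hψ, CategoryTheory.Functor.map_comp, CategoryTheory.Functor.map_comp,
      ← Category.assoc, hβ, MorphismProperty.LeftFraction.map_comp_map_s]
  have key : (evtInv (Fin 2 ⥤ C)).Q.map (α.f ≫ ψ.f) =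
      (evtInv (Fin 2 ⥤ C)).Q.map (β.f ≫ ψ.s) := by
    have hPP : Pfun.map (α.f ≫ ψ.f) = Pfun.map (β.f ≫ ψ.s) := by
      rw [← Pbar_map, ← Pbar_map, ← hf2, ← hg2,
        Pbar.map_comp f, Pbar.map_comp g, hfg]
    have c0 : (evtInv C).Q.map (Cmp0.map (α.f ≫ ψ.f)) =
        (evtInv C).Q.map (Cmp0.map (β.f ≫ ψ.s)) :=
      congrArg (fun (q : Pfun.obj Z ⟶ Pfun.obj ψ.Y') => q.app fzero) hPP
    have c1 : (evtInv C).Q.map (Cmp1.map (α.f ≫ ψ.f)) =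
        (evtInv C).Q.map (Cmp1.map (β.f ≫ ψ.s)) :=
      congrArg (fun (q : Pfun.obj Z ⟶ Pfun.obj ψ.Y') => q.app fone) hPP
    obtain ⟨R₀, u₀, hu₀, hab₀⟩ :=
      (MorphismProperty.map_eq_iff_postcomp (evtInv C).Q (evtInv C) _ _).mp c0
    obtain ⟨R₁, u₁, hu₁, hab₁⟩ :=
      (MorphismProperty.map_eq_iff_postcomp (evtInv C).Q (evtInv C) _ _).mp c1
    obtain ⟨ψ2, hψ2⟩ := (MorphismProperty.RightFraction.mk u₀ hu₀
      (cmpHom ψ.Y' ≫ u₁)).exists_leftFraction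
    dsimp at hψ2
    have sq : cmpHom ψ.Y' ≫ (u₁ ≫ ψ2.s) = u₀ ≫ ψ2.f := by
      rw [← Category.assoc]
      exact hψ2
    have hσ' : evtInv (Fin 2 ⥤ C) (intoGlue u₀ (u₁ ≫ ψ2.s) sq) := by
      apply evtInv_of_cmp
      · rw [cmp0_intoGlue]
        exact hu₀
      · rw [cmp1_intoGlue]
        exact evtInv_comp _ _ hu₁ ψ2.hs
    have haσ : (α.f ≫ ψ.f) ≫ intoGlue u₀ (u₁ ≫ ψ2.s) sq =
        (β.f ≫ ψ.s) ≫ intoGlue u₀ (u₁ ≫ ψ2.s) sq := by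
      apply cmp_ext
      · erw [Cmp0.map_comp (α.f ≫ ψ.f), Cmp0.map_comp (β.f ≫ ψ.s), cmp0_intoGlue, hab₀]; rfl
      · erw [Cmp1.map_comp (α.f ≫ ψ.f), Cmp1.map_comp (β.f ≫ ψ.s), cmp1_intoGlue,
          ← Category.assoc, ← Category.assoc, hab₁]
    exact (MorphismProperty.map_eq_iff_postcomp (evtInv (Fin 2 ⥤ C)).Q
      (evtInv (Fin 2 ⥤ C)) _ _).mpr ⟨glue ψ2.f, intoGlue u₀ (u₁ ≫ ψ2.s) sq, hσ', haσ⟩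
  calc f = (f ≫ (evtInv (Fin 2 ⥤ C)).Q.map (α.s ≫ ψ.f)) ≫
          inv ((evtInv (Fin 2 ⥤ C)).Q.map (α.s ≫ ψ.f)) := by
          rw [Category.assoc, IsIso.hom_inv_id, Category.comp_id]
    _ = (g ≫ (evtInv (Fin 2 ⥤ C)).Q.map (α.s ≫ ψ.f)) ≫
          inv ((evtInv (Fin 2 ⥤ C)).Q.map (α.s ≫ ψ.f)) := by rw [hf2, hg2, key]
    _ = g := by rw [Category.assoc, IsIso.hom_inv_id, Category.comp_id]

lemma Pbar_full : (Pbar (C := C)).Full := by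
  constructor
  intro M M' u
  obtain ⟨Z, rfl⟩ := obj_eq_Q_obj M
  obtain ⟨Z', rfl⟩ := obj_eq_Q_obj M'
  change Pfun.obj Z ⟶ Pfun.obj Z' at u
  obtain ⟨u0, hu0⟩ : ∃ u0 : (evtInv C).Q.obj (Cmp0.obj Z) ⟶ (evtInv C).Q.obj (Cmp0.obj Z'),
      u.app fzero = u0 := ⟨_, rfl⟩
  obtain ⟨u1, hu1⟩ : ∃ u1 : (evtInv C).Q.obj (Cmp1.obj Z) ⟶ (evtInv C).Q.obj (Cmp1.obj Z'),
      u.app fone = u1 := ⟨_, rfl⟩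
  obtain ⟨αf, hαf⟩ := Localization.exists_leftFraction (evtInv C).Q (evtInv C)
    (u0)
  obtain ⟨βf, hβf⟩ := Localization.exists_leftFraction (evtInv C).Q (evtInv C)
    (u1)
  obtain ⟨ψ3, hψ3⟩ := (MorphismProperty.RightFraction.mk αf.s αf.hs
    (cmpHom Z' ≫ βf.s)).exists_leftFraction
  dsimp at hψ3
  have nat : (evtInv C).Q.map (cmpHom Z) ≫ u1 =
      u0 ≫ (evtInv C).Q.map (cmpHom Z') := by
    rw [← hu0, ← hu1]
    exact u.naturality f01
  have hm0 : u0 ≫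
      (evtInv C).Q.map αf.s = (evtInv C).Q.map αf.f := by
    rw [hαf]
    exact MorphismProperty.LeftFraction.map_comp_map_s _ _ _
  have hm1 : u1 ≫
      (evtInv C).Q.map βf.s = (evtInv C).Q.map βf.f := by
    rw [hβf]
    exact MorphismProperty.LeftFraction.map_comp_map_s _ _ _
  have hψ3' : cmpHom Z' ≫ βf.s ≫ ψ3.s = αf.s ≫ ψ3.f := by
    rw [← Category.assoc]
    exact hψ3
  have hQm : (evtInv C).Q.map (cmpHom Z ≫ βf.f ≫ ψ3.s) =
      (evtInv C).Q.map (αf.f ≫ ψ3.f) := by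
    calc (evtInv C).Q.map (cmpHom Z ≫ βf.f ≫ ψ3.s)
        = (evtInv C).Q.map (cmpHom Z) ≫ (evtInv C).Q.map βf.f ≫ (evtInv C).Q.map ψ3.s := by
          rw [CategoryTheory.Functor.map_comp, CategoryTheory.Functor.map_comp]
      _ = (evtInv C).Q.map (cmpHom Z) ≫ (u1 ≫ (evtInv C).Q.map βf.s) ≫
            (evtInv C).Q.map ψ3.s := by rw [hm1]
      _ = ((evtInv C).Q.map (cmpHom Z) ≫ u1) ≫ (evtInv C).Q.map βf.s ≫
            (evtInv C).Q.map ψ3.s := by simp only [Category.assoc]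
      _ = (u0 ≫ (evtInv C).Q.map (cmpHom Z')) ≫ (evtInv C).Q.map βf.s ≫
            (evtInv C).Q.map ψ3.s := by rw [nat]
      _ = u0 ≫ (evtInv C).Q.map (cmpHom Z' ≫ βf.s ≫ ψ3.s) := by
          rw [CategoryTheory.Functor.map_comp, CategoryTheory.Functor.map_comp]
          simp only [Category.assoc]
      _ = u0 ≫ (evtInv C).Q.map (αf.s ≫ ψ3.f) := by rw [hψ3']
      _ = (u0 ≫ (evtInv C).Q.map αf.s) ≫ (evtInv C).Q.map ψ3.f := by
          rw [CategoryTheory.Functor.map_comp]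
          simp only [Category.assoc]
      _ = (evtInv C).Q.map αf.f ≫ (evtInv C).Q.map ψ3.f := by rw [hm0]
      _ = (evtInv C).Q.map (αf.f ≫ ψ3.f) := by rw [CategoryTheory.Functor.map_comp]
  obtain ⟨V', e, he, hm⟩ :=
    (MorphismProperty.map_eq_iff_postcomp (evtInv C).Q (evtInv C) _ _).mp hQm
  have sqs : cmpHom Z' ≫ (βf.s ≫ ψ3.s ≫ e) = αf.s ≫ (ψ3.f ≫ e) := by
    simp only [← Category.assoc]
    simp only [← Category.assoc] at hψ3'
    rw [hψ3']
  have sqa : cmpHom Z ≫ (βf.f ≫ ψ3.s ≫ e) = αf.f ≫ (ψ3.f ≫ e) := by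
    simp only [Category.assoc] at hm
    exact hm
  have hsD : evtInv (Fin 2 ⥤ C) (intoGlue αf.s (βf.s ≫ ψ3.s ≫ e) sqs) := by
    apply evtInv_of_cmp
    · rw [cmp0_intoGlue]
      exact αf.hs
    · rw [cmp1_intoGlue]
      exact evtInv_comp _ _ βf.hs (evtInv_comp _ _ ψ3.hs he)
  haveI hiso : IsIso ((evtInv (Fin 2 ⥤ C)).Q.map (intoGlue αf.s (βf.s ≫ ψ3.s ≫ e) sqs)) :=
    Localization.inverts (evtInv (Fin 2 ⥤ C)).Q (evtInv (Fin 2 ⥤ C)) _ hsD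
  haveI hisoP : IsIso (Pfun.map (intoGlue αf.s (βf.s ≫ ψ3.s ≫ e) sqs)) :=
    Pfun_inverts _ hsD
  refine ⟨(evtInv (Fin 2 ⥤ C)).Q.map (intoGlue αf.f (βf.f ≫ ψ3.s ≫ e) sqa) ≫
    inv ((evtInv (Fin 2 ⥤ C)).Q.map (intoGlue αf.s (βf.s ≫ ψ3.s ≫ e) sqs)), ?_⟩
  erw [CategoryTheory.Functor.map_comp, CategoryTheory.Functor.map_inv, Pbar_map,
    IsIso.comp_inv_eq, Pbar_map]
  apply hom_ext₁
  · show (evtInv C).Q.map (Cmp0.map (intoGlue αf.f (βf.f ≫ ψ3.s ≫ e) sqa)) =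
      u.app fzero ≫ (evtInv C).Q.map (Cmp0.map (intoGlue αf.s (βf.s ≫ ψ3.s ≫ e) sqs))
    rw [cmp0_intoGlue, cmp0_intoGlue, hu0]
    exact hm0.symm
  · show (evtInv C).Q.map (Cmp1.map (intoGlue αf.f (βf.f ≫ ψ3.s ≫ e) sqa)) =
      u.app fone ≫ (evtInv C).Q.map (Cmp1.map (intoGlue αf.s (βf.s ≫ ψ3.s ≫ e) sqs))
    erw [cmp1_intoGlue, cmp1_intoGlue, (evtInv C).Q.map_comp βf.f,
      (evtInv C).Q.map_comp βf.s, (evtInv C).Q.map_comp ψ3.s, hu1, ← hm1]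
    simp only [Category.assoc]
    rfl

end PartD

theorem shat_morphism_category_equiv [HasInitial C] :
    Nonempty ((Fin 2 ⥤ Shat C) ≌ Shat (Fin 2 ⥤ C)) := by
  haveI : (Pbar (C := C)).Faithful := Pbar_faithful
  haveI : (Pbar (C := C)).Full := Pbar_full
  haveI : (Pbar (C := C)).EssSurj := Pbar_essSurj
  haveI : (Pbar (C := C)).IsEquivalence := {}
  exact ⟨(Pbar (C := C)).asEquivalence.symm⟩

end SeqCompletion
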